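/- Suppose that for all g₁, g₂ ∈ A with g₂ ∉ ⟨g₁⟩ there exists a finite-index normal subgroup Ḡ of G with g₂ ∉ ⟨g₁⟩·Ḡ. Then G is cyclic subgroup separable, i.e. for every g ∈ G the cyclic subgroup ⟨g⟩ is separable in G. -/

import Mathlib

open Subgroup Pointwise

/-- The free abelian group of rank `n`, written multiplicatively. -/
abbrev FreeAb (n : ℕ) : Type := Multiplicative (Fin n → ℤ)

/-- The isomorphism from `A = ⊤` onto the image `φ(A)` induced by an injective
endomorphism `φ` of the free abelian group `A`. -/
noncomputable def ascIso {n : ℕ} (φ : FreeAb n →* FreeAb n) (hφ : Function.Injective φ) :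
    (⊤ : Subgroup (FreeAb n)) ≃* φ.range :=
  Subgroup.topEquiv.trans (MonoidHom.ofInjective hφ)

/-- The ascending HNN extension `G = A∗_φ = ⟨A, t ∣ t·a·t⁻¹ = φ(a) for a ∈ A⟩`,
realized as the HNN extension of `A` over the subgroups `⊤` and `φ.range`. -/
abbrev AscHNN {n : ℕ} (φ : FreeAb n →* FreeAb n) (hφ : Function.Injective φ) : Type :=
  HNNExtension (FreeAb n) ⊤ φ.range (ascIso φ hφ)

/-!
Let `height : G → ℤ` be the exponent sum of `t`. If `height h ∉ height g · ℤ`, a cyclic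
quotient of `ℤ` separates `h` from `⟨g⟩`. If `height h = k · height g` with `height g ≠ 0`, then
`g⁻ᵏ h` is a nontrivial element of the kernel; a finite quotient in which it survives, refined by
a congruence quotient of `ℤ`, separates. Elements of the kernel have the form `t⁻ᵖ a tᵖ` with
`a ∈ A`, so when `g` and `h` both lie in the kernel one power of `t` conjugates both into `A`,
where the hypothesis applies.
-/

section Separation

variable {G : Type*} [Group G]

def FiniteQuotientSeparates (g h : G) : Prop :=
  ∃ N : Subgroup G, N.Normal ∧ N.FiniteIndex ∧ h ∉ (zpowers g : Set G) * N

theorem mem_zpowers_mul_iff {N : Subgroup G} {g h : G} :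
    h ∈ (zpowers g : Set G) * N ↔ ∃ j : ℤ, g ^ j * h ∈ N := by
  simp only [Set.mem_mul, SetLike.mem_coe, mem_zpowers_iff]
  constructor
  · rintro ⟨_, ⟨j, rfl⟩, x, hx, rfl⟩
    exact ⟨-j, by simpa [← mul_assoc, zpow_neg]⟩
  · rintro ⟨j, hj⟩
    exact ⟨_, ⟨-j, rfl⟩, _, hj, by simp [← mul_assoc, zpow_neg]⟩

theorem finiteQuotientSeparates_one_iff {h : G} :
    FiniteQuotientSeparates 1 h ↔ ∃ N : Subgroup G, N.Normal ∧ N.FiniteIndex ∧ h ∉ N := by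
  simp [FiniteQuotientSeparates]

namespace FiniteQuotientSeparates

theorem of_conj {u g h : G} (hs : FiniteQuotientSeparates (u * g * u⁻¹) (u * h * u⁻¹)) :
    FiniteQuotientSeparates g h := by
  obtain ⟨N, hN, hfin, hnot⟩ := hs
  refine ⟨N, hN, hfin, fun hmem => hnot ?_⟩
  obtain ⟨j, hj⟩ := mem_zpowers_mul_iff.mp hmem
  refine mem_zpowers_mul_iff.mpr ⟨j, ?_⟩
  rw [conj_zpow]
  simpa [mul_assoc] using hN.conj_mem _ hj u

theorem of_zpow_mul {g h : G} {k : ℤ} (hs : FiniteQuotientSeparates g (g ^ k * h)) :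
    FiniteQuotientSeparates g h := by
  obtain ⟨N, hN, hfin, hnot⟩ := hs
  refine ⟨N, hN, hfin, fun hmem => hnot ?_⟩
  obtain ⟨j, hj⟩ := mem_zpowers_mul_iff.mp hmem
  exact mem_zpowers_mul_iff.mpr ⟨j - k, by rwa [← mul_assoc, ← zpow_add, sub_add_cancel]⟩

end FiniteQuotientSeparates

namespace MonoidHom

def reduceMod (ψ : G →* Multiplicative ℤ) (m : ℕ) : G →* Multiplicative (ZMod m) :=
  (Int.castAddHom (ZMod m)).toMultiplicative.comp ψ

theorem reduceMod_eq_one_iff (ψ : G →* Multiplicative ℤ) (m : ℕ) (x : G) :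
    ψ.reduceMod m x = 1 ↔ (m : ℤ) ∣ (ψ x).toAdd :=
  ZMod.intCast_zmod_eq_zero_iff_dvd _ _

end MonoidHom

variable (ψ : G →* Multiplicative ℤ)

theorem finiteQuotientSeparates_of_dvd {g h : G} {m : ℕ} (hm : m ≠ 0)
    (hg : (m : ℤ) ∣ (ψ g).toAdd) (hh : ¬(m : ℤ) ∣ (ψ h).toAdd) : FiniteQuotientSeparates g h := by
  have : NeZero m := ⟨hm⟩
  refine ⟨(ψ.reduceMod m).ker, inferInstance, inferInstance, fun hmem => hh ?_⟩
  obtain ⟨j, hj⟩ := mem_zpowers_mul_iff.mp hmem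
  rw [MonoidHom.mem_ker, MonoidHom.reduceMod_eq_one_iff, map_mul, map_zpow, toAdd_mul,
    toAdd_zpow, smul_eq_mul] at hj
  exact (dvd_add_right (hg.mul_left j)).mp hj

theorem finiteQuotientSeparates_of_notMem {g h : G} {N : Subgroup G} [N.Normal] [N.FiniteIndex]
    (hg : ψ g ≠ 1) (hh : ψ h = 1) (hN : h ∉ N) : FiniteQuotientSeparates g h := by
  set a := (ψ g).toAdd
  have ha : a ≠ 0 := mt toAdd_eq_zero.mp hg
  have : NeZero ((a * N.index).natAbs) :=
    ⟨Int.natAbs_ne_zero.mpr (mul_ne_zero ha (by exact_mod_cast FiniteIndex.index_ne_zero))⟩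
  refine ⟨N ⊓ (ψ.reduceMod (a * N.index).natAbs).ker, inferInstance, inferInstance,
    fun hmem => hN ?_⟩
  obtain ⟨j, hj⟩ := mem_zpowers_mul_iff.mp hmem
  obtain ⟨hjN, hjψ⟩ := mem_inf.mp hj
  rw [MonoidHom.mem_ker, MonoidHom.reduceMod_eq_one_iff, Int.natAbs_dvd, map_mul, map_zpow, hh,
    mul_one, toAdd_zpow, smul_eq_mul, mul_comm j] at hjψ
  -- the level `|a| · [G : N]` is chosen so that `[G : N] ∣ j`, whence `g ^ j ∈ N`
  obtain ⟨s, rfl⟩ := (mul_dvd_mul_iff_left ha).mp hjψ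
  have hgs : g ^ ((N.index : ℤ) * s) ∈ N := by
    rw [zpow_mul, zpow_natCast]
    exact zpow_mem (N.pow_index_mem g) s
  simpa using N.mul_mem (inv_mem hgs) hjN

theorem finiteQuotientSeparates_of_forall_ker
    (hker : ∀ g h : G, ψ g = 1 → ψ h = 1 → h ∉ zpowers g → FiniteQuotientSeparates g h)
    {g h : G} (hgh : h ∉ zpowers g) : FiniteQuotientSeparates g h := by
  by_cases hg : ψ g = 1
  · by_cases hh : ψ h = 1
    · exact hker g h hg hh hgh
    · refine finiteQuotientSeparates_of_dvd ψ (m := (ψ h).toAdd.natAbs + 1) (by omega)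
        (by simp [hg]) fun hdvd =>
          hh (toAdd_eq_zero.mp (Int.eq_zero_of_dvd_of_natAbs_lt_natAbs hdvd (by omega)))
  · by_cases hdvd : (ψ g).toAdd ∣ (ψ h).toAdd
    · obtain ⟨k, hk⟩ := hdvd
      have hψ : ψ (g ^ (-k) * h) = 1 := by
        apply Multiplicative.toAdd.injective
        simp [hk, mul_comm]
      have hne : g ^ (-k) * h ∉ zpowers 1 := by
        rw [zpowers_one_eq_bot, mem_bot, ← eq_inv_mul_iff_mul_eq, mul_one, ← zpow_neg, neg_neg]
        exact fun e => hgh (e ▸ zpow_mem_zpowers g k)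
      obtain ⟨N, _, _, hN⟩ :=
        finiteQuotientSeparates_one_iff.mp (hker 1 _ (map_one ψ) hψ hne)
      exact (finiteQuotientSeparates_of_notMem ψ hg hψ hN).of_zpow_mul
    · exact finiteQuotientSeparates_of_dvd ψ (Int.natAbs_ne_zero.mpr (mt toAdd_eq_zero.mp hg))
        (Int.natAbs_dvd.mpr dvd_rfl) (mt Int.natAbs_dvd.mp hdvd)

end Separation

namespace AscHNN

open HNNExtension Filter

variable {n : ℕ} {φ : FreeAb n →* FreeAb n} {hφ : Function.Injective φ}

theorem t_mul_of (a : FreeAb n) : (t : AscHNN φ hφ) * of a = of (φ a) * t := by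
  simpa [ascIso, MonoidHom.ofInjective_apply] using
    HNNExtension.t_mul_of (φ := ascIso φ hφ) ⟨a, trivial⟩

theorem t_pow_mul_of (k : ℕ) (a : FreeAb n) :
    (t : AscHNN φ hφ) ^ k * of a = of (φ^[k] a) * t ^ k := by
  induction k with
  | zero => simp
  | succ k ih =>
    rw [pow_succ', mul_assoc, ih, ← mul_assoc, t_mul_of, Function.iterate_succ_apply', mul_assoc,
      ← pow_succ']

theorem of_mul_inv_t_pow (k : ℕ) (a : FreeAb n) :
    (of a : AscHNN φ hφ) * (t ^ k)⁻¹ = (t ^ k)⁻¹ * of (φ^[k] a) := by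
  rw [mul_inv_eq_iff_eq_mul, mul_assoc, ← t_pow_mul_of, inv_mul_cancel_left]

variable (φ hφ) in
noncomputable def height : AscHNN φ hφ →* Multiplicative ℤ :=
  lift 1 (Multiplicative.ofAdd 1) (by simp)

@[simp]
theorem height_of (a : FreeAb n) : height φ hφ (of a) = 1 := by
  simp [height]

@[simp]
theorem height_t : height φ hφ t = Multiplicative.ofAdd 1 := by
  simp [height]

def HasNormalForm (g : AscHNN φ hφ) : Prop :=
  ∃ (p q : ℕ) (a : FreeAb n), g = (t ^ p)⁻¹ * of a * t ^ q

namespace HasNormalForm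

theorem of_mul {g : AscHNN φ hφ} (hg : HasNormalForm g) (b : FreeAb n) :
    HasNormalForm (of b * g) := by
  obtain ⟨p, q, a, rfl⟩ := hg
  exact ⟨p, q, φ^[p] b * a, by
    rw [← mul_assoc, ← mul_assoc, of_mul_inv_t_pow]
    simp only [map_mul, mul_assoc]⟩

theorem t_mul {g : AscHNN φ hφ} (hg : HasNormalForm g) : HasNormalForm (t * g) := by
  obtain ⟨p, q, a, rfl⟩ := hg
  cases p with
  | zero => exact ⟨0, q + 1, φ a, by simp [← mul_assoc, t_mul_of, pow_succ']⟩
  | succ p => exact ⟨p, q, a, by simp [pow_succ, mul_assoc]⟩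

theorem inv_t_mul {g : AscHNN φ hφ} (hg : HasNormalForm g) : HasNormalForm (t⁻¹ * g) := by
  obtain ⟨p, q, a, rfl⟩ := hg
  exact ⟨p + 1, q, a, by simp [pow_succ, mul_assoc]⟩

end HasNormalForm

theorem hasNormalForm (g : AscHNN φ hφ) : HasNormalForm g := by
  suffices ∀ y, HasNormalForm y → HasNormalForm (g * y) ∧ HasNormalForm (g⁻¹ * y) by
    simpa using (this 1 ⟨0, 0, 1, by simp⟩).1
  induction g using HNNExtension.induction_on with
  | of b => exact fun y hy => ⟨hy.of_mul b, by simpa using hy.of_mul b⁻¹⟩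
  | t => exact fun y hy => ⟨hy.t_mul, hy.inv_t_mul⟩
  | mul x y hx hy =>
    exact fun z hz => ⟨by simpa [mul_assoc] using (hx _ (hy z hz).1).1,
      by simpa [mul_assoc] using (hy _ (hx z hz).2).2⟩
  | inv x hx => exact fun y hy => by simpa [and_comm] using hx y hy

theorem eventually_t_pow_conj_eq_of {g : AscHNN φ hφ} (hg : height φ hφ g = 1) :
    ∀ᶠ k in atTop, ∃ c : FreeAb n, t ^ k * g * (t ^ k)⁻¹ = of c := by
  obtain ⟨p, q, a, rfl⟩ := hasNormalForm g
  obtain rfl : q = p := by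
    have := congrArg Multiplicative.toAdd hg
    simp at this
    omega
  refine eventually_atTop.mpr ⟨q, fun k hk => ⟨φ^[k - q] a, ?_⟩⟩
  obtain ⟨d, rfl⟩ := Nat.exists_eq_add_of_le' hk
  rw [Nat.add_sub_cancel, pow_add]
  simp only [mul_inv_rev, mul_assoc, mul_inv_cancel_left]
  rw [← mul_assoc, t_pow_mul_of, mul_inv_cancel_right]

theorem finiteQuotientSeparates_of_height_eq_one
    (hA : ∀ g₁ g₂ : FreeAb n, (of g₂ : AscHNN φ hφ) ∉ zpowers (of g₁) →
      FiniteQuotientSeparates (of g₁ : AscHNN φ hφ) (of g₂))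
    {g h : AscHNN φ hφ} (hg : height φ hφ g = 1) (hh : height φ hφ h = 1)
    (hgh : h ∉ zpowers g) : FiniteQuotientSeparates g h := by
  obtain ⟨k, ⟨c₁, hc₁⟩, ⟨c₂, hc₂⟩⟩ :=
    ((eventually_t_pow_conj_eq_of hg).and (eventually_t_pow_conj_eq_of hh)).exists
  refine FiniteQuotientSeparates.of_conj (u := t ^ k) ?_
  rw [hc₁, hc₂]
  refine hA c₁ c₂ fun hmem => hgh ?_
  obtain ⟨j, hj⟩ := mem_zpowers_iff.mp hmem
  rw [← hc₁, ← hc₂, conj_zpow] at hj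
  exact ⟨j, mul_left_cancel (mul_right_cancel hj)⟩

end AscHNN

theorem stmt_6_general (n : ℕ)
    (φ : FreeAb n →* FreeAb n) (hφ : Function.Injective φ)
    (hA : ∀ g₁ g₂ : FreeAb n,
      (HNNExtension.of g₂ : AscHNN φ hφ) ∉
          Subgroup.zpowers (HNNExtension.of g₁ : AscHNN φ hφ) →
        ∃ Gbar : Subgroup (AscHNN φ hφ), Gbar.Normal ∧ Gbar.FiniteIndex ∧
          (HNNExtension.of g₂ : AscHNN φ hφ) ∉
            ((Subgroup.zpowers (HNNExtension.of g₁ : AscHNN φ hφ) : Set (AscHNN φ hφ)) *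
              (Gbar : Set (AscHNN φ hφ)))) :
    ∀ g h : AscHNN φ hφ, h ∉ Subgroup.zpowers g →
      ∃ N : Subgroup (AscHNN φ hφ), N.Normal ∧ N.FiniteIndex ∧
        h ∉ ((Subgroup.zpowers g : Set (AscHNN φ hφ)) * (N : Set (AscHNN φ hφ))) :=
  fun _ _ => finiteQuotientSeparates_of_forall_ker (AscHNN.height φ hφ)
    fun _ _ => AscHNN.finiteQuotientSeparates_of_height_eq_one hA

/-- If for all `g₁, g₂ ∈ A` with `g₂ ∉ ⟨g₁⟩` there is a finite-index
normal subgroup `Gbar` of `G = A∗_φ` with `g₂ ∉ ⟨g₁⟩·Gbar`, then `G` is cyclic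
subgroup separable. -/
theorem stmt_6 (n : ℕ) (hn : 1 ≤ n)
    (φ : FreeAb n →* FreeAb n) (hφ : Function.Injective φ)
    (hA : ∀ g₁ g₂ : FreeAb n,
      (HNNExtension.of g₂ : AscHNN φ hφ) ∉
          Subgroup.zpowers (HNNExtension.of g₁ : AscHNN φ hφ) →
        ∃ Gbar : Subgroup (AscHNN φ hφ), Gbar.Normal ∧ Gbar.FiniteIndex ∧
          (HNNExtension.of g₂ : AscHNN φ hφ) ∉
            ((Subgroup.zpowers (HNNExtension.of g₁ : AscHNN φ hφ) : Set (AscHNN φ hφ)) *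
              (Gbar : Set (AscHNN φ hφ)))) :
    ∀ g h : AscHNN φ hφ, h ∉ Subgroup.zpowers g →
      ∃ N : Subgroup (AscHNN φ hφ), N.Normal ∧ N.FiniteIndex ∧
        h ∉ ((Subgroup.zpowers g : Set (AscHNN φ hφ)) * (N : Set (AscHNN φ hφ))) :=
  stmt_6_general n φ hφ hA
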